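/- Let (F, F₂, F₀, γ) be a monoidal functor with anomaly from a strict monoidal category C to a k-linear strict monoidal category D with k-bilinear tensor product, with chosen splittings p_X, q_X of the idempotents Π_X, and set F̃₂(X,Y) := p_{X⊗Y}∘F₂(X,Y)∘(q_X⊗q_Y) and F̃₀ := p_𝟙∘F₀. Then the unit coherences hold for the unitalized data: for every object X of C, F̃₂(X,𝟙)∘(id_{F̃(X)}⊗F̃₀) = id_{F̃(X)} and F̃₂(𝟙,X)∘(F̃₀⊗id_{F̃(X)}) = id_{F̃(X)}. -/

import Mathlib

/-!
Write `Π_X = p_X ≫ q_X = γ_{X,X} • F(𝟙_X)`. The cocycle identity with two identities gives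
`γ_{𝟙,f} = γ_{𝟙,𝟙}`, so `Π` is absorbed by every `F(f)`; monoidality of `γ` and naturality of `F₂`
let `Π ⊗ Π` pass through `F₂` as `Π`. Hence every `q ≫ p` that unitalization inserts between `F₂`
and `F(ρ_X)` (resp. `F(λ_X)`) can be deleted, after which the unit coherence of `F` applies and the
remaining `q_X ≫ p_X` is the identity.
-/

open CategoryTheory MonoidalCategory

theorem cocycle_id_left {C : Type*} [Category C] {G : Type*} [Mul G] [IsLeftCancelMul G]
    (γ : ∀ {X Y Z : C}, (X ⟶ Y) → (Y ⟶ Z) → G)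
    (hcocycle : ∀ {X Y Z W : C} (f : X ⟶ Y) (g : Y ⟶ Z) (h : Z ⟶ W),
      γ f (g ≫ h) * γ g h = γ (f ≫ g) h * γ f g)
    {A B : C} (f : A ⟶ B) : γ (𝟙 A) f = γ (𝟙 A) (𝟙 A) := by
  have h := hcocycle (𝟙 A) (𝟙 A) f
  simp only [Category.id_comp] at h
  exact mul_left_cancel h

theorem smul_tensorHom_smul {R : Type*} [CommSemiring R] {D : Type*} [Category D] [Preadditive D]
    [Linear R D] [MonoidalCategory D] [MonoidalPreadditive D] [MonoidalLinear R D]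
    {A B A' B' : D} (r s : R) (f : A ⟶ B) (g : A' ⟶ B') :
    (r • f) ⊗ₘ (s • g) = (r * s) • (f ⊗ₘ g) := by
  simp only [MonoidalCategory.tensorHom_def, MonoidalLinear.whiskerLeft_smul,
    MonoidalLinear.smul_whiskerRight, Linear.smul_comp, Linear.comp_smul, smul_smul, mul_comm]

section Anomaly

variable {k : Type*} [CommSemiring k] {C : Type*} [Category C] {D : Type*} [Category D]
  [Preadditive D] [Linear k D]

def anomalyIdempotent (γ : ∀ {X Y Z : C}, (X ⟶ Y) → (Y ⟶ Z) → kˣ) {Fobj : C → D}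
    (Fmap : ∀ {X Y : C}, (X ⟶ Y) → (Fobj X ⟶ Fobj Y)) (A : C) : Fobj A ⟶ Fobj A :=
  (γ (𝟙 A) (𝟙 A) : k) • Fmap (𝟙 A)

theorem anomalyIdempotent_comp_map (γ : ∀ {X Y Z : C}, (X ⟶ Y) → (Y ⟶ Z) → kˣ)
    (hcocycle : ∀ {X Y Z W : C} (f : X ⟶ Y) (g : Y ⟶ Z) (h : Z ⟶ W),
      γ f (g ≫ h) * γ g h = γ (f ≫ g) h * γ f g)
    {Fobj : C → D} (Fmap : ∀ {X Y : C}, (X ⟶ Y) → (Fobj X ⟶ Fobj Y))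
    (hF : ∀ {X Y Z : C} (f : X ⟶ Y) (g : Y ⟶ Z),
      Fmap (f ≫ g) = (γ f g : k) • (Fmap f ≫ Fmap g))
    {A B : C} (f : A ⟶ B) : anomalyIdempotent γ Fmap A ≫ Fmap f = Fmap f := by
  rw [anomalyIdempotent, Linear.smul_comp, ← cocycle_id_left γ hcocycle f, ← hF,
    Category.id_comp]

theorem tensorHom_anomalyIdempotent_comp [MonoidalCategory C] [MonoidalCategory D]
    [MonoidalPreadditive D] [MonoidalLinear k D]
    (γ : ∀ {X Y Z : C}, (X ⟶ Y) → (Y ⟶ Z) → kˣ)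
    (hγmon : ∀ {X Y Z X' Y' Z' : C} (f : X ⟶ Y) (g : Y ⟶ Z)
      (f' : X' ⟶ Y') (g' : Y' ⟶ Z'),
      γ (f ⊗ₘ f') (g ⊗ₘ g') = γ f g * γ f' g')
    {Fobj : C → D} (Fmap : ∀ {X Y : C}, (X ⟶ Y) → (Fobj X ⟶ Fobj Y))
    (F₂ : ∀ X Y : C, Fobj X ⊗ Fobj Y ⟶ Fobj (X ⊗ Y))
    (hF₂nat : ∀ {X X' Y Y' : C} (f : X ⟶ X') (g : Y ⟶ Y'),
      F₂ X Y ≫ Fmap (f ⊗ₘ g) = (Fmap f ⊗ₘ Fmap g) ≫ F₂ X' Y')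
    (A B : C) :
    (anomalyIdempotent γ Fmap A ⊗ₘ anomalyIdempotent γ Fmap B) ≫ F₂ A B =
      F₂ A B ≫ anomalyIdempotent γ Fmap (A ⊗ B) := by
  have hγ := hγmon (𝟙 A) (𝟙 A) (𝟙 B) (𝟙 B)
  rw [id_tensorHom_id] at hγ
  simp only [anomalyIdempotent]
  rw [smul_tensorHom_smul, ← Units.val_mul, ← hγ, Linear.smul_comp, ← hF₂nat, id_tensorHom_id,
    Linear.comp_smul]

end Anomaly

section Unitalization

variable {C : Type*} [Category C] [MonoidalCategory C] {D : Type*} [Category D]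
  [MonoidalCategory D] {Fobj : C → D} (Fmap : ∀ {X Y : C}, (X ⟶ Y) → (Fobj X ⟶ Fobj Y))
  (F₂ : ∀ X Y : C, Fobj X ⊗ Fobj Y ⟶ Fobj (X ⊗ Y))

theorem tensorHom_comp_idempotent_comp_F₂_comp_map (e : ∀ X : C, Fobj X ⟶ Fobj X)
    (heF : ∀ {A B : C} (f : A ⟶ B), e A ≫ Fmap f = Fmap f)
    (heF₂ : ∀ A B : C, (e A ⊗ₘ e B) ≫ F₂ A B = F₂ A B ≫ e (A ⊗ B))
    {U V : D} {A B Z : C} (a : U ⟶ Fobj A) (b : V ⟶ Fobj B) (g : A ⊗ B ⟶ Z) :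
    ((a ≫ e A) ⊗ₘ (b ≫ e B)) ≫ F₂ A B ≫ Fmap g = (a ⊗ₘ b) ≫ F₂ A B ≫ Fmap g := by
  rw [← tensorHom_comp_tensorHom, Category.assoc, reassoc_of% heF₂, heF]

variable {Ftobj : C → D} (F₀ : 𝟙_ D ⟶ Fobj (𝟙_ C))
  (p : ∀ X : C, Fobj X ⟶ Ftobj X) (q : ∀ X : C, Ftobj X ⟶ Fobj X)

theorem unitalized_rightUnitality (hpq : ∀ X : C, q X ≫ p X = 𝟙 (Ftobj X))
    (hpqF : ∀ {A B : C} (f : A ⟶ B), (p A ≫ q A) ≫ Fmap f = Fmap f)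
    (hpqF₂ : ∀ A B : C, ((p A ≫ q A) ⊗ₘ (p B ≫ q B)) ≫ F₂ A B = F₂ A B ≫ p (A ⊗ B) ≫ q (A ⊗ B))
    (hrunit : ∀ X : C,
      (𝟙 (Fobj X) ⊗ₘ F₀) ≫ F₂ X (𝟙_ C) ≫ Fmap (ρ_ X).hom = (ρ_ (Fobj X)).hom) (X : C) :
    (𝟙 (Ftobj X) ⊗ₘ (F₀ ≫ p (𝟙_ C))) ≫
        ((q X ⊗ₘ q (𝟙_ C)) ≫ F₂ X (𝟙_ C) ≫ p (X ⊗ 𝟙_ C)) ≫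
        (q (X ⊗ 𝟙_ C) ≫ Fmap (ρ_ X).hom ≫ p X) = (ρ_ (Ftobj X)).hom :=
  calc
    _ = ((q X ≫ p X ≫ q X) ⊗ₘ (F₀ ≫ p (𝟙_ C) ≫ q (𝟙_ C))) ≫
          F₂ X (𝟙_ C) ≫ Fmap (ρ_ X).hom ≫ p X := by
      simp only [Category.assoc, tensorHom_comp_tensorHom_assoc, Category.id_comp]
      rw [reassoc_of% hpqF, reassoc_of% hpq]
    _ = (q X ⊗ₘ F₀) ≫ F₂ X (𝟙_ C) ≫ Fmap (ρ_ X).hom ≫ p X := by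
      rw [reassoc_of% (tensorHom_comp_idempotent_comp_F₂_comp_map Fmap F₂ _ hpqF hpqF₂ (q X) F₀
        (ρ_ X).hom)]
    _ = (ρ_ (Ftobj X)).hom := by
      rw [← tensor_id_comp_id_tensor F₀ (q X), Category.assoc, reassoc_of% hrunit, tensorHom_id,
        rightUnitor_naturality_assoc, hpq, Category.comp_id]

theorem unitalized_leftUnitality (hpq : ∀ X : C, q X ≫ p X = 𝟙 (Ftobj X))
    (hpqF : ∀ {A B : C} (f : A ⟶ B), (p A ≫ q A) ≫ Fmap f = Fmap f)
    (hpqF₂ : ∀ A B : C, ((p A ≫ q A) ⊗ₘ (p B ≫ q B)) ≫ F₂ A B = F₂ A B ≫ p (A ⊗ B) ≫ q (A ⊗ B))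
    (hlunit : ∀ X : C,
      (F₀ ⊗ₘ 𝟙 (Fobj X)) ≫ F₂ (𝟙_ C) X ≫ Fmap (λ_ X).hom = (λ_ (Fobj X)).hom) (X : C) :
    ((F₀ ≫ p (𝟙_ C)) ⊗ₘ 𝟙 (Ftobj X)) ≫
        ((q (𝟙_ C) ⊗ₘ q X) ≫ F₂ (𝟙_ C) X ≫ p (𝟙_ C ⊗ X)) ≫
        (q (𝟙_ C ⊗ X) ≫ Fmap (λ_ X).hom ≫ p X) = (λ_ (Ftobj X)).hom :=
  calc
    _ = ((F₀ ≫ p (𝟙_ C) ≫ q (𝟙_ C)) ⊗ₘ (q X ≫ p X ≫ q X)) ≫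
          F₂ (𝟙_ C) X ≫ Fmap (λ_ X).hom ≫ p X := by
      simp only [Category.assoc, tensorHom_comp_tensorHom_assoc, Category.id_comp]
      rw [reassoc_of% hpqF, reassoc_of% hpq]
    _ = (F₀ ⊗ₘ q X) ≫ F₂ (𝟙_ C) X ≫ Fmap (λ_ X).hom ≫ p X := by
      rw [reassoc_of% (tensorHom_comp_idempotent_comp_F₂_comp_map Fmap F₂ _ hpqF hpqF₂ F₀ (q X)
        (λ_ X).hom)]
    _ = (λ_ (Ftobj X)).hom := by
      rw [← id_tensor_comp_tensor_id (q X) F₀, Category.assoc, reassoc_of% hlunit, id_tensorHom,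
        leftUnitor_naturality_assoc, hpq, Category.comp_id]

end Unitalization

theorem stmt_12_general {k : Type*} [Field k]
    {C : Type*} [Category C] [MonoidalCategory C]
    {D : Type*} [Category D] [Preadditive D] [Linear k D] [MonoidalCategory D]
    [MonoidalPreadditive D] [MonoidalLinear k D]
    (γ : ∀ {X Y Z : C}, (X ⟶ Y) → (Y ⟶ Z) → kˣ)
    (hcocycle : ∀ {X Y Z W : C} (f : X ⟶ Y) (g : Y ⟶ Z) (h : Z ⟶ W),
      γ f (g ≫ h) * γ g h = γ (f ≫ g) h * γ f g)
    (hγmon : ∀ {X Y Z X' Y' Z' : C} (f : X ⟶ Y) (g : Y ⟶ Z)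
      (f' : X' ⟶ Y') (g' : Y' ⟶ Z'),
      γ (f ⊗ₘ f') (g ⊗ₘ g') = γ f g * γ f' g')
    (Fobj : C → D) (Fmap : ∀ {X Y : C}, (X ⟶ Y) → (Fobj X ⟶ Fobj Y))
    (hF : ∀ {X Y Z : C} (f : X ⟶ Y) (g : Y ⟶ Z),
      Fmap (f ≫ g) = (γ f g : k) • (Fmap f ≫ Fmap g))
    (F₂ : ∀ X Y : C, Fobj X ⊗ Fobj Y ⟶ Fobj (X ⊗ Y))
    (F₀ : 𝟙_ D ⟶ Fobj (𝟙_ C))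
    (hF₂nat : ∀ {X X' Y Y' : C} (f : X ⟶ X') (g : Y ⟶ Y'),
      F₂ X Y ≫ Fmap (f ⊗ₘ g) = (Fmap f ⊗ₘ Fmap g) ≫ F₂ X' Y')
    (hrunit : ∀ X : C,
      (𝟙 (Fobj X) ⊗ₘ F₀) ≫ F₂ X (𝟙_ C) ≫ Fmap (ρ_ X).hom = (ρ_ (Fobj X)).hom)
    (hlunit : ∀ X : C,
      (F₀ ⊗ₘ 𝟙 (Fobj X)) ≫ F₂ (𝟙_ C) X ≫ Fmap (λ_ X).hom = (λ_ (Fobj X)).hom)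
    (Ftobj : C → D)
    (p : ∀ X : C, Fobj X ⟶ Ftobj X) (q : ∀ X : C, Ftobj X ⟶ Fobj X)
    (hpq : ∀ X : C, q X ≫ p X = 𝟙 (Ftobj X))
    (hqp : ∀ X : C, p X ≫ q X = (γ (𝟙 X) (𝟙 X) : k) • Fmap (𝟙 X))
    :
    ∀ X : C,
      (𝟙 (Ftobj X) ⊗ₘ (F₀ ≫ p (𝟙_ C))) ≫
          ((q X ⊗ₘ q (𝟙_ C)) ≫ F₂ X (𝟙_ C) ≫ p (X ⊗ 𝟙_ C)) ≫
          (q (X ⊗ 𝟙_ C) ≫ Fmap (ρ_ X).hom ≫ p X) = (ρ_ (Ftobj X)).hom ∧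
      ((F₀ ≫ p (𝟙_ C)) ⊗ₘ 𝟙 (Ftobj X)) ≫
          ((q (𝟙_ C) ⊗ₘ q X) ≫ F₂ (𝟙_ C) X ≫ p (𝟙_ C ⊗ X)) ≫
          (q (𝟙_ C ⊗ X) ≫ Fmap (λ_ X).hom ≫ p X) = (λ_ (Ftobj X)).hom := by
  have hpqF : ∀ {A B : C} (f : A ⟶ B), (p A ≫ q A) ≫ Fmap f = Fmap f := fun f => by
    rw [hqp]
    exact anomalyIdempotent_comp_map γ hcocycle Fmap hF f
  have hpqF₂ : ∀ A B : C,
      ((p A ≫ q A) ⊗ₘ (p B ≫ q B)) ≫ F₂ A B = F₂ A B ≫ p (A ⊗ B) ≫ q (A ⊗ B) := fun A B => by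
    rw [hqp, hqp, hqp]
    exact tensorHom_anomalyIdempotent_comp γ hγmon Fmap F₂ hF₂nat A B
  exact fun X => ⟨unitalized_rightUnitality Fmap F₂ F₀ p q hpq hpqF hpqF₂ hrunit X,
    unitalized_leftUnitality Fmap F₂ F₀ p q hpq hpqF hpqF₂ hlunit X⟩

/-- With `F̃(f) = p ∘ F(f) ∘ q`,
`F̃₂(X,Y) = p_{X⊗Y} ∘ F₂(X,Y) ∘ (q_X ⊗ q_Y)` and `F̃₀ = p_𝟙 ∘ F₀`, the unit
coherences hold for the unitalized data:
`F̃₂(X,𝟙) ∘ (id ⊗ F̃₀) = id_{F̃(X)}` and `F̃₂(𝟙,X) ∘ (F̃₀ ⊗ id) = id_{F̃(X)}`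
(stated with the unitors inserted, as for `F`). -/
theorem stmt_12 {k : Type*} [Field k]
    {C : Type*} [Category C] [MonoidalCategory C]
    {D : Type*} [Category D] [Preadditive D] [Linear k D] [MonoidalCategory D]
    [MonoidalPreadditive D] [MonoidalLinear k D]
    (γ : ∀ {X Y Z : C}, (X ⟶ Y) → (Y ⟶ Z) → kˣ)
    (hcocycle : ∀ {X Y Z W : C} (f : X ⟶ Y) (g : Y ⟶ Z) (h : Z ⟶ W),
      γ f (g ≫ h) * γ g h = γ (f ≫ g) h * γ f g)
    (hγmon : ∀ {X Y Z X' Y' Z' : C} (f : X ⟶ Y) (g : Y ⟶ Z)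
      (f' : X' ⟶ Y') (g' : Y' ⟶ Z'),
      γ (f ⊗ₘ f') (g ⊗ₘ g') = γ f g * γ f' g')
    (Fobj : C → D) (Fmap : ∀ {X Y : C}, (X ⟶ Y) → (Fobj X ⟶ Fobj Y))
    (hF : ∀ {X Y Z : C} (f : X ⟶ Y) (g : Y ⟶ Z),
      Fmap (f ≫ g) = (γ f g : k) • (Fmap f ≫ Fmap g))
    (F₂ : ∀ X Y : C, Fobj X ⊗ Fobj Y ⟶ Fobj (X ⊗ Y))
    (F₀ : 𝟙_ D ⟶ Fobj (𝟙_ C))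
    (hF₂nat : ∀ {X X' Y Y' : C} (f : X ⟶ X') (g : Y ⟶ Y'),
      F₂ X Y ≫ Fmap (f ⊗ₘ g) = (Fmap f ⊗ₘ Fmap g) ≫ F₂ X' Y')
    (hassoc : ∀ X Y Z : C,
      (F₂ X Y ⊗ₘ 𝟙 (Fobj Z)) ≫ F₂ (X ⊗ Y) Z ≫ Fmap (α_ X Y Z).hom =
        (α_ (Fobj X) (Fobj Y) (Fobj Z)).hom ≫ (𝟙 (Fobj X) ⊗ₘ F₂ Y Z) ≫ F₂ X (Y ⊗ Z))
    (hrunit : ∀ X : C,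
      (𝟙 (Fobj X) ⊗ₘ F₀) ≫ F₂ X (𝟙_ C) ≫ Fmap (ρ_ X).hom = (ρ_ (Fobj X)).hom)
    (hlunit : ∀ X : C,
      (F₀ ⊗ₘ 𝟙 (Fobj X)) ≫ F₂ (𝟙_ C) X ≫ Fmap (λ_ X).hom = (λ_ (Fobj X)).hom)
    (Ftobj : C → D)
    (p : ∀ X : C, Fobj X ⟶ Ftobj X) (q : ∀ X : C, Ftobj X ⟶ Fobj X)
    (hpq : ∀ X : C, q X ≫ p X = 𝟙 (Ftobj X))
    (hqp : ∀ X : C, p X ≫ q X = (γ (𝟙 X) (𝟙 X) : k) • Fmap (𝟙 X))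
    :
    ∀ X : C,
      (𝟙 (Ftobj X) ⊗ₘ (F₀ ≫ p (𝟙_ C))) ≫
          ((q X ⊗ₘ q (𝟙_ C)) ≫ F₂ X (𝟙_ C) ≫ p (X ⊗ 𝟙_ C)) ≫
          (q (X ⊗ 𝟙_ C) ≫ Fmap (ρ_ X).hom ≫ p X) = (ρ_ (Ftobj X)).hom ∧
      ((F₀ ≫ p (𝟙_ C)) ⊗ₘ 𝟙 (Ftobj X)) ≫
          ((q (𝟙_ C) ⊗ₘ q X) ≫ F₂ (𝟙_ C) X ≫ p (𝟙_ C ⊗ X)) ≫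
          (q (𝟙_ C ⊗ X) ≫ Fmap (λ_ X).hom ≫ p X) = (λ_ (Ftobj X)).hom :=
  stmt_12_general γ hcocycle hγmon Fobj Fmap hF F₂ F₀ hF₂nat hrunit hlunit Ftobj p q hpq hqp
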